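/- Suppose every real root of Q is positive, w₀' > 0, and Q(t) < 0 for all t ∈ [0, w₀'], and write δ₊ = δ₊(w₀'). Let w be a profile solution with initial slope w₀' and let r₀ be its first zero. Then for all r ∈ (0, r₀): κ'(r) ≤ −(δ₊/8)·r and κ(r) ≤ w₀' − (δ₊/16)·r², where κ(r) = w(r)/(r·√(1 + w(r)²)). Consequently, if in addition 64·w₀'³ < 27·δ₊, then 1 − r²·κ(r)² ≥ ξ(w₀') = 1 − 64·w₀'³/(27·δ₊) for all r ∈ (0, r₀). -/

import Mathlib

open Real Set Filter MeasureTheory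

/-- The cubic polynomial `Q(t) = t³ + 2c₀t² + (c₀² + λ)t − p/2`. -/
noncomputable def Qpoly (c₀ lam p t : ℝ) : ℝ :=
  t ^ 3 + 2 * c₀ * t ^ 2 + (c₀ ^ 2 + lam) * t - p / 2

/-- The principal curvature `κ(r) = w(r)/(r·√(1 + w(r)²))`. -/
noncomputable def kappaFun (w : ℝ → ℝ) (r : ℝ) : ℝ :=
  w r / (r * Real.sqrt (1 + (w r) ^ 2))

/-- The interval `(0, r⁎)` (with possibly infinite right endpoint) as a subset of `ℝ`. -/
def profDom (rstar : EReal) : Set ℝ := {r : ℝ | 0 < r ∧ (r : EReal) < rstar}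

/-- A profile solution with initial slope `w₀'` on the interval `(0, r⁎)`:
a `C²` function satisfying the profile ODE with `w(r) → 0` and `w'(r) → w₀'` as `r → 0⁺`. -/
structure IsProfileSolution (c₀ lam p w₀' : ℝ) (rstar : EReal) (w : ℝ → ℝ) : Prop where
  pos : 0 < rstar
  smooth : ContDiffOn ℝ 2 w (profDom rstar)
  ode : ∀ r ∈ profDom rstar,
    deriv (deriv w) r =
      -(deriv w r) / r + 5 * w r * (deriv w r) ^ 2 / (2 * (1 + (w r) ^ 2))
        + w r * (1 + (w r) ^ 2) / r ^ 2
        + (r / 2) * (1 + (w r) ^ 2) ^ ((5 : ℝ) / 2) * Qpoly c₀ lam p (kappaFun w r)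
  lim_w : Tendsto w (nhdsWithin 0 (Set.Ioi 0)) (nhds 0)
  lim_w' : Tendsto (deriv w) (nhdsWithin 0 (Set.Ioi 0)) (nhds w₀')

/-- A maximal profile solution: a profile solution that admits no proper extension. -/
def IsMaximal (c₀ lam p w₀' : ℝ) (rstar : EReal) (w : ℝ → ℝ) : Prop :=
  IsProfileSolution c₀ lam p w₀' rstar w ∧
    ∀ (rstar' : EReal) (w' : ℝ → ℝ), IsProfileSolution c₀ lam p w₀' rstar' w' →
      Set.EqOn w w' (profDom rstar) → rstar' ≤ rstar

/-- `δ₊(w₀') = min{−Q(t) : 0 ≤ t ≤ w₀'}`. -/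
noncomputable def deltaPlus (c₀ lam p w₀' : ℝ) : ℝ :=
  sInf ((fun t => -Qpoly c₀ lam p t) '' Set.Icc 0 w₀')

/-- `μ(w₀') = max{−Q(t) : 0 ≤ t ≤ w₀'}`. -/
noncomputable def muQ (c₀ lam p w₀' : ℝ) : ℝ :=
  sSup ((fun t => -Qpoly c₀ lam p t) '' Set.Icc 0 w₀')

/-- `δ₋ = min{−Q(t) : t ≤ 0}`. -/
noncomputable def deltaMinus (c₀ lam p : ℝ) : ℝ :=
  sInf ((fun t => -Qpoly c₀ lam p t) '' Set.Iic 0)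

/-- `ξ(w₀') = 1 − 64·w₀'³/(27·δ₊(w₀'))`. -/
noncomputable def xiQ (c₀ lam p w₀' : ℝ) : ℝ :=
  1 - 64 * w₀' ^ 3 / (27 * deltaPlus c₀ lam p w₀')

/-- `r₀` is the first zero of `w`: `w > 0` on `(0, r₀)` and `w(r₀) = 0`. -/
def IsFirstZero (rstar : EReal) (w : ℝ → ℝ) (r₀ : ℝ) : Prop :=
  0 < r₀ ∧ (r₀ : EReal) < rstar ∧ (∀ r ∈ Set.Ioo 0 r₀, 0 < w r) ∧ w r₀ = 0

/-- `rM` is the first critical point of `w` in `(0, r₀)`. -/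
def IsFirstCrit (w : ℝ → ℝ) (r₀ rM : ℝ) : Prop :=
  rM ∈ Set.Ioo 0 r₀ ∧ deriv w rM = 0 ∧ ∀ r ∈ Set.Ioo 0 rM, deriv w r ≠ 0

/-- The filter of real numbers approaching the (possibly infinite) endpoint `r⁎` from the left. -/
noncomputable def leftLim (rstar : EReal) : Filter ℝ :=
  Filter.comap (fun r : ℝ => (r : EReal)) (nhdsWithin rstar (Set.Iio rstar))



noncomputable def sA (w : ℝ → ℝ) (r : ℝ) : ℝ := Real.sqrt (1 + w r ^ 2)

lemma sA_pos (w : ℝ → ℝ) (r : ℝ) : 0 < sA w r :=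
  Real.sqrt_pos.2 (by positivity)

lemma sA_sq (w : ℝ → ℝ) (r : ℝ) : sA w r ^ 2 = 1 + w r ^ 2 :=
  Real.sq_sqrt (by positivity)

lemma hasDerivAt_sA {w : ℝ → ℝ} {r d : ℝ} (hw : HasDerivAt w d r) :
    HasDerivAt (sA w) (w r * d / sA w r) r := by
  have h1 : HasDerivAt (fun x => 1 + w x ^ 2) (2 * w r * d) r := by
    have := (hw.pow 2).const_add 1
    refine this.congr_deriv ?_; ring
  have h2 : (1 + w r ^ 2) ≠ 0 := by positivity
  have := (Real.hasDerivAt_sqrt h2).comp r h1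
  refine this.congr_deriv ?_
  unfold sA
  field_simp

lemma hasDerivAt_hFun {w : ℝ → ℝ} {r d : ℝ} (hw : HasDerivAt w d r) :
    HasDerivAt (fun x => w x / sA w x) (d / sA w r ^ 3) r := by
  have hs := sA_pos w r
  have := hw.div (hasDerivAt_sA hw) hs.ne'
  refine this.congr_deriv ?_
  have h2 := sA_sq w r
  field_simp
  linear_combination d * h2

noncomputable def hFun (w : ℝ → ℝ) (r : ℝ) : ℝ := w r / sA w r
noncomputable def GFun (w : ℝ → ℝ) (r : ℝ) : ℝ :=
  r ^ 2 * (deriv w r / sA w r ^ 3) - r * hFun w r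

lemma kappa_eq (w : ℝ → ℝ) (r : ℝ) : kappaFun w r = hFun w r / r := by
  unfold kappaFun hFun sA
  rw [mul_comm, div_div]

lemma hasDerivAt_kappa {w : ℝ → ℝ} {r : ℝ} (hr : r ≠ 0)
    (hw : HasDerivAt w (deriv w r) r) :
    HasDerivAt (kappaFun w) (GFun w r / r ^ 3) r := by
  have hh := hasDerivAt_hFun hw
  have : HasDerivAt (fun x => (fun y => w y / sA w y) x / x)
      ((deriv w r / sA w r ^ 3 * r - (w r / sA w r) * 1) / r ^ 2) r :=
    hh.div (hasDerivAt_id r) hr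
  have he : kappaFun w = fun x => (fun y => w y / sA w y) x / x := by
    funext x; exact kappa_eq w x
  rw [he]
  convert this using 1
  unfold GFun hFun
  field_simp

lemma rpow_five_halves (x : ℝ) (hx : 0 ≤ x) : x ^ ((5:ℝ)/2) = Real.sqrt x ^ 5 := by
  rw [Real.sqrt_eq_rpow, ← Real.rpow_natCast (x ^ ((1:ℝ)/2)) 5, ← Real.rpow_mul hx]
  norm_num

lemma hasDerivAt_G {c₀ lam p : ℝ} {w : ℝ → ℝ} {r : ℝ} (hr : 0 < r)
    (hw : HasDerivAt w (deriv w r) r)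
    (hw2 : HasDerivAt (deriv w) (deriv (deriv w) r) r)
    (hODE : deriv (deriv w) r =
      -(deriv w r) / r + 5 * w r * (deriv w r) ^ 2 / (2 * (1 + (w r) ^ 2))
        + w r * (1 + (w r) ^ 2) / r ^ 2
        + (r / 2) * (1 + (w r) ^ 2) ^ ((5 : ℝ) / 2) * Qpoly c₀ lam p (kappaFun w r)) :
    HasDerivAt (GFun w)
      (-(r ^ 2 * w r * (deriv w r) ^ 2) / (2 * sA w r ^ 5)
        + (r ^ 3 * (1 + w r ^ 2) / 2) * Qpoly c₀ lam p (kappaFun w r)) r := by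
  have hS := sA_pos w r
  have hS2 := sA_sq w r
  have hsa := hasDerivAt_sA hw
  have hs3 : HasDerivAt (fun x => sA w x ^ 3) ((3:ℕ) * sA w r ^ 2 * (w r * deriv w r / sA w r)) r :=
    hsa.pow 3
  have hf2 : HasDerivAt (fun x => deriv w x / sA w x ^ 3)
      ((deriv (deriv w) r * sA w r ^ 3 - deriv w r * ((3:ℕ) * sA w r ^ 2 * (w r * deriv w r / sA w r))) / (sA w r ^ 3) ^ 2) r :=
    hw2.div hs3 (by positivity)
  have hf1 : HasDerivAt (fun x : ℝ => x ^ 2) ((2:ℕ) * r ^ 1) r := hasDerivAt_pow 2 r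
  have hh := hasDerivAt_hFun hw
  have hG : HasDerivAt (GFun w)
      (((2:ℕ) * r ^ 1) * (deriv w r / sA w r ^ 3)
        + r ^ 2 * ((deriv (deriv w) r * sA w r ^ 3 - deriv w r * ((3:ℕ) * sA w r ^ 2 * (w r * deriv w r / sA w r))) / (sA w r ^ 3) ^ 2)
        - (1 * hFun w r + r * (deriv w r / sA w r ^ 3))) r := by
    have : GFun w = fun x => x ^ 2 * (deriv w x / sA w x ^ 3) - x * (fun y => w y / sA w y) x := rfl
    rw [this]
    exact (hf1.mul hf2).sub ((hasDerivAt_id r).mul hh)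
  convert hG using 1
  rw [hODE, rpow_five_halves _ (by positivity)]
  have hS5 : Real.sqrt (1 + w r ^ 2) = sA w r := rfl
  rw [hS5, ← hS2]
  unfold hFun
  push_cast
  field_simp
  ring

lemma tendsto_w_div {w : ℝ → ℝ} {w₀' R : ℝ} (hR : 0 < R)
    (hc : ∀ x ∈ Set.Ioo (0:ℝ) R, HasDerivAt w (deriv w x) x)
    (lw : Tendsto w (nhdsWithin 0 (Set.Ioi 0)) (nhds 0))
    (lw' : Tendsto (deriv w) (nhdsWithin 0 (Set.Ioi 0)) (nhds w₀')) :
    Tendsto (fun r => w r / r) (nhdsWithin 0 (Set.Ioi 0)) (nhds w₀') := by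
  rw [Metric.tendsto_nhdsWithin_nhds] at lw' ⊢
  intro ε hε
  obtain ⟨δ₁, hδ₁, hd⟩ := lw' (ε/2) (by linarith)
  refine ⟨min δ₁ R, lt_min hδ₁ hR, ?_⟩
  intro r hr hrd
  have hr0 : 0 < r := hr
  have hrδ : r < δ₁ := by
    have := hrd; rw [Real.dist_eq, sub_zero, abs_of_pos hr0] at this; exact lt_of_lt_of_le this (min_le_left _ _)
  have hrR : r < R := by
    have := hrd; rw [Real.dist_eq, sub_zero, abs_of_pos hr0] at this; exact lt_of_lt_of_le this (min_le_right _ _)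
  have key : ∀ a ∈ Set.Ioo (0:ℝ) r,
      ‖(w r - w₀' * r) - (w a - w₀' * a)‖ ≤ ε/2 * ‖r - a‖ := by
    intro a ha
    have hderiv : ∀ x ∈ Set.Icc a r, HasDerivWithinAt (fun y => w y - w₀' * y)
        (deriv w x - w₀') (Set.Icc a r) x := by
      intro x hx
      have hx1 : x ∈ Set.Ioo (0:ℝ) R := ⟨lt_of_lt_of_le ha.1 hx.1, lt_of_le_of_lt hx.2 hrR⟩
      have h1 : HasDerivAt (fun y => w y - w₀' * y) (deriv w x - w₀' * 1) x :=
        (hc x hx1).sub ((hasDerivAt_id x).const_mul w₀')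
      simpa using h1.hasDerivWithinAt
    have hbound : ∀ x ∈ Set.Icc a r, ‖deriv w x - w₀'‖ ≤ ε/2 := by
      intro x hx
      have hx0 : 0 < x := lt_of_lt_of_le ha.1 hx.1
      have hxd : dist x 0 < δ₁ := by
        rw [Real.dist_eq, sub_zero, abs_of_pos hx0]; exact lt_of_le_of_lt hx.2 hrδ
      have := hd hx0 hxd
      rw [Real.dist_eq] at this
      exact le_of_lt this
    exact (convex_Icc a r).norm_image_sub_le_of_norm_hasDerivWithin_le hderiv hbound
      (Set.left_mem_Icc.2 (le_of_lt ha.2)) (Set.right_mem_Icc.2 (le_of_lt ha.2))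
  have hlim : Tendsto (fun a => ‖(w r - w₀' * r) - (w a - w₀' * a)‖)
      (nhdsWithin 0 (Set.Ioi 0)) (nhds ‖(w r - w₀' * r) - 0‖) := by
    have h1 : Tendsto (fun a : ℝ => w a - w₀' * a) (nhdsWithin 0 (Set.Ioi 0)) (nhds 0) := by
      have h2 : Tendsto (fun a : ℝ => w₀' * a) (nhdsWithin 0 (Set.Ioi 0)) (nhds 0) := by
        have := (tendsto_id.const_mul w₀' : Tendsto (fun a : ℝ => w₀' * a) (nhds 0) (nhds (w₀' * 0)))
        simpa using this.mono_left nhdsWithin_le_nhds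
      simpa using lw.sub h2
    exact (tendsto_const_nhds.sub h1).norm
  have hfinal : ‖w r - w₀' * r‖ ≤ ε/2 * r := by
    have hev : ∀ᶠ a in nhdsWithin 0 (Set.Ioi 0),
        ‖(w r - w₀' * r) - (w a - w₀' * a)‖ ≤ ε/2 * r := by
      filter_upwards [Ioo_mem_nhdsGT_of_mem (Set.left_mem_Ico.2 hr0)] with a ha
      refine le_trans (key a ha) ?_
      have : ‖r - a‖ ≤ r := by
        rw [Real.norm_eq_abs, abs_of_pos (by linarith [ha.1, ha.2] : (0:ℝ) < r - a)]
        linarith [ha.1]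
      nlinarith [this, le_of_lt hε]
    have := le_of_tendsto hlim hev
    simpa using this
  rw [Real.dist_eq]
  have heq : w r / r - w₀' = (w r - w₀' * r) / r := by field_simp
  rw [heq, abs_div, abs_of_pos hr0]
  rw [Real.norm_eq_abs] at hfinal
  have h1 : |w r - w₀' * r| / r ≤ ε / 2 * r / r := (div_le_div_iff_of_pos_right hr0).mpr hfinal
  have h2 : ε / 2 * r / r = ε / 2 := by field_simp
  rw [h2] at h1
  linarith

lemma tendsto_sA {w : ℝ → ℝ} (lw : Tendsto w (nhdsWithin 0 (Set.Ioi 0)) (nhds 0)) :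
    Tendsto (sA w) (nhdsWithin 0 (Set.Ioi 0)) (nhds 1) := by
  have hcont : Continuous fun t : ℝ => Real.sqrt (1 + t ^ 2) := by
    exact Real.continuous_sqrt.comp (by continuity)
  have := (hcont.tendsto 0).comp lw
  rw [show √(1 + (0:ℝ) ^ 2) = 1 by simp] at this
  exact this

lemma tendsto_kappa {w : ℝ → ℝ} {w₀' R : ℝ} (hR : 0 < R)
    (hc : ∀ x ∈ Set.Ioo (0:ℝ) R, HasDerivAt w (deriv w x) x)
    (lw : Tendsto w (nhdsWithin 0 (Set.Ioi 0)) (nhds 0))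
    (lw' : Tendsto (deriv w) (nhdsWithin 0 (Set.Ioi 0)) (nhds w₀')) :
    Tendsto (kappaFun w) (nhdsWithin 0 (Set.Ioi 0)) (nhds w₀') := by
  have h1 := (tendsto_w_div hR hc lw lw').div (tendsto_sA lw) one_ne_zero
  have he : kappaFun w = fun r => (w r / r) / sA w r := by
    funext r; unfold kappaFun sA; rw [mul_comm, div_div]; ring_nf
  rw [he]
  rw [div_one] at h1
  exact h1

lemma tendsto_G {w : ℝ → ℝ} {w₀' : ℝ}
    (lw : Tendsto w (nhdsWithin 0 (Set.Ioi 0)) (nhds 0))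
    (lw' : Tendsto (deriv w) (nhdsWithin 0 (Set.Ioi 0)) (nhds w₀')) :
    Tendsto (GFun w) (nhdsWithin 0 (Set.Ioi 0)) (nhds 0) := by
  have hid : Tendsto (fun r : ℝ => r) (nhdsWithin 0 (Set.Ioi 0)) (nhds 0) :=
    tendsto_id.mono_left nhdsWithin_le_nhds
  have hS := tendsto_sA lw
  have h1 : Tendsto (fun r => r ^ 2 * (deriv w r / sA w r ^ 3))
      (nhdsWithin 0 (Set.Ioi 0)) (nhds (0 ^ 2 * (w₀' / 1 ^ 3))) :=
    (hid.pow 2).mul (lw'.div (hS.pow 3) (by norm_num))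
  have h2 : Tendsto (fun r => r * (w r / sA w r))
      (nhdsWithin 0 (Set.Ioi 0)) (nhds (0 * (0 / 1))) :=
    hid.mul (lw.div hS one_ne_zero)
  have := h1.sub h2
  have he : GFun w = fun r => r ^ 2 * (deriv w r / sA w r ^ 3) - r * (w r / sA w r) := rfl
  rw [he]
  simpa using this

lemma antitoneOn_Ioo_of_deriv {f f' : ℝ → ℝ} {b : ℝ}
    (hd : ∀ x ∈ Set.Ioo (0:ℝ) b, HasDerivAt f (f' x) x)
    (hneg : ∀ x ∈ Set.Ioo (0:ℝ) b, f' x ≤ 0) : AntitoneOn f (Set.Ioo 0 b) := by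
  apply antitoneOn_of_deriv_nonpos (convex_Ioo 0 b)
  · exact fun x hx => (hd x hx).continuousAt.continuousWithinAt
  · intro x hx; rw [interior_Ioo] at hx
    exact (hd x hx).differentiableAt.differentiableWithinAt
  · intro x hx; rw [interior_Ioo] at hx; rw [(hd x hx).deriv]; exact hneg x hx

lemma strictAntiOn_Ioo_of_deriv {f f' : ℝ → ℝ} {b : ℝ}
    (hd : ∀ x ∈ Set.Ioo (0:ℝ) b, HasDerivAt f (f' x) x)
    (hneg : ∀ x ∈ Set.Ioo (0:ℝ) b, f' x < 0) : StrictAntiOn f (Set.Ioo 0 b) := by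
  apply strictAntiOn_of_deriv_neg (convex_Ioo 0 b)
  · exact fun x hx => (hd x hx).continuousAt.continuousWithinAt
  · intro x hx; rw [interior_Ioo] at hx; rw [(hd x hx).deriv]; exact hneg x hx


lemma profDom_open (rstar : EReal) : IsOpen (profDom rstar) := by
  have : profDom rstar = Set.Ioi (0:ℝ) ∩ ((fun r : ℝ => (r : EReal)) ⁻¹' Set.Iio rstar) := rfl
  rw [this]
  exact isOpen_Ioi.inter (isOpen_Iio.preimage continuous_coe_real_ereal)


set_option maxHeartbeats 2000000 in
/-- Under the conditions of Lemma `thm-pos`, on `(0, r₀)` one has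
`κ'(r) ≤ −(δ₊/8)·r` and `κ(r) ≤ w₀' − (δ₊/16)·r²`; consequently, if `64·w₀'³ < 27·δ₊`,
then `1 − r²·κ(r)² ≥ ξ(w₀')` on `(0, r₀)`. -/
theorem stmt4 (c₀ lam p w₀' : ℝ) (hp : 0 < p)
    (hroots : ∀ t : ℝ, Qpoly c₀ lam p t = 0 → 0 < t)
    (hw₀ : 0 < w₀')
    (hQneg : ∀ t ∈ Set.Icc (0 : ℝ) w₀', Qpoly c₀ lam p t < 0)
    (rstar : EReal) (w : ℝ → ℝ)
    (hsol : IsProfileSolution c₀ lam p w₀' rstar w)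
    (r₀ : ℝ) (hr₀ : IsFirstZero rstar w r₀) :
    (∀ r ∈ Set.Ioo (0 : ℝ) r₀,
      deriv (kappaFun w) r ≤ -(deltaPlus c₀ lam p w₀' / 8) * r ∧
      kappaFun w r ≤ w₀' - (deltaPlus c₀ lam p w₀' / 16) * r ^ 2) ∧
    (64 * w₀' ^ 3 < 27 * deltaPlus c₀ lam p w₀' →
      ∀ r ∈ Set.Ioo (0 : ℝ) r₀,
        xiQ c₀ lam p w₀' ≤ 1 - r ^ 2 * (kappaFun w r) ^ 2) := by
  obtain ⟨hr₀pos, hr₀star, hwpos, hwz⟩ := hr₀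
  set δ := deltaPlus c₀ lam p w₀' with hδdef
  -- facts about δ
  have hQcont : Continuous (fun t => -Qpoly c₀ lam p t) := by
    unfold Qpoly; fun_prop
  have hcpt : IsCompact ((fun t => -Qpoly c₀ lam p t) '' Set.Icc 0 w₀') :=
    isCompact_Icc.image hQcont
  have hne : ((fun t => -Qpoly c₀ lam p t) '' Set.Icc 0 w₀').Nonempty :=
    (Set.nonempty_Icc.2 hw₀.le).image _
  have hδpos : 0 < δ := by
    obtain ⟨t₀, ht₀, heq⟩ := hcpt.sInf_mem hne
    rw [hδdef]
    unfold deltaPlus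
    rw [← heq]
    simpa using hQneg t₀ ht₀
  have hδle : ∀ t ∈ Set.Icc (0:ℝ) w₀', Qpoly c₀ lam p t ≤ -δ := by
    intro t ht
    have : δ ≤ -Qpoly c₀ lam p t := csInf_le hcpt.bddBelow (Set.mem_image_of_mem _ ht)
    linarith
  -- domain facts
  have hopen := profDom_open rstar
  have hsub : Set.Ioo (0:ℝ) r₀ ⊆ profDom rstar := by
    intro r hr
    exact ⟨hr.1, lt_trans (by exact_mod_cast hr.2) hr₀star⟩
  have hdiffw : ∀ x ∈ profDom rstar, HasDerivAt w (deriv w x) x := by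
    intro x hx
    exact ((hsol.smooth.differentiableOn (by norm_num)).differentiableAt
      (hopen.mem_nhds hx)).hasDerivAt
  have hdw2 : ∀ x ∈ profDom rstar, HasDerivAt (deriv w) (deriv (deriv w) x) x := by
    intro x hx
    have h1 : ContDiffOn ℝ 1 (deriv w) (profDom rstar) :=
      hsol.smooth.deriv_of_isOpen hopen (by norm_num)
    exact ((h1.differentiableOn (by norm_num)).differentiableAt
      (hopen.mem_nhds hx)).hasDerivAt
  have hcR : ∀ x ∈ Set.Ioo (0:ℝ) r₀, HasDerivAt w (deriv w x) x :=
    fun x hx => hdiffw x (hsub hx)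
  -- kappa positivity
  have hκpos : ∀ r ∈ Set.Ioo (0:ℝ) r₀, 0 < kappaFun w r := by
    intro r hr
    unfold kappaFun
    exact div_pos (hwpos r hr) (mul_pos hr.1 (Real.sqrt_pos.2 (by positivity)))
  -- derivative of kappa and G on the domain
  have hκd : ∀ r ∈ Set.Ioo (0:ℝ) r₀, HasDerivAt (kappaFun w) (GFun w r / r ^ 3) r :=
    fun r hr => hasDerivAt_kappa hr.1.ne' (hcR r hr)
  have hGd : ∀ r ∈ Set.Ioo (0:ℝ) r₀, HasDerivAt (GFun w)
      (-(r ^ 2 * w r * (deriv w r) ^ 2) / (2 * sA w r ^ 5)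
        + (r ^ 3 * (1 + w r ^ 2) / 2) * Qpoly c₀ lam p (kappaFun w r)) r :=
    fun r hr => hasDerivAt_G hr.1 (hcR r hr) (hdw2 r (hsub hr)) (hsol.ode r (hsub hr))
  -- limits
  have lk := tendsto_kappa hr₀pos hcR hsol.lim_w hsol.lim_w'
  have lG := tendsto_G hsol.lim_w hsol.lim_w'
  -- the integrated bound
  have hint : ∀ c > (0:ℝ), ∀ b, 0 < b → b ≤ r₀ →
      (∀ r ∈ Set.Ioo (0:ℝ) b, Qpoly c₀ lam p (kappaFun w r) ≤ -c) →
      ∀ r ∈ Set.Ioo (0:ℝ) b, GFun w r ≤ -(c/8) * r ^ 4 := by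
    intro c hc b hb hbr₀ hQb r hr
    have hsubb : Set.Ioo (0:ℝ) b ⊆ Set.Ioo (0:ℝ) r₀ :=
      Set.Ioo_subset_Ioo le_rfl hbr₀
    set Φ : ℝ → ℝ := fun x => GFun w x + c/8 * x ^ 4 with hΦdef
    have hΦd : ∀ x ∈ Set.Ioo (0:ℝ) b, HasDerivAt Φ
        ((-(x ^ 2 * w x * (deriv w x) ^ 2) / (2 * sA w x ^ 5)
          + (x ^ 3 * (1 + w x ^ 2) / 2) * Qpoly c₀ lam p (kappaFun w x)) + c/2 * x ^ 3) x := by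
      intro x hx
      have h4 : HasDerivAt (fun y : ℝ => c/8 * y ^ 4) (c/2 * x ^ 3) x := by
        have := (hasDerivAt_pow 4 x).const_mul (c/8)
        refine this.congr_deriv ?_
        push_cast; ring
      exact (hGd x (hsubb hx)).add h4
    have hΦneg : ∀ x ∈ Set.Ioo (0:ℝ) b,
        ((-(x ^ 2 * w x * (deriv w x) ^ 2) / (2 * sA w x ^ 5)
          + (x ^ 3 * (1 + w x ^ 2) / 2) * Qpoly c₀ lam p (kappaFun w x)) + c/2 * x ^ 3) ≤ 0 := by
      intro x hx
      have hx0 : 0 < x := hx.1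
      have hwx := hwpos x (hsubb hx)
      have hSx := sA_pos w x
      have hq := hQb x hx
      have h1 : -(x ^ 2 * w x * (deriv w x) ^ 2) / (2 * sA w x ^ 5) ≤ 0 := by
        apply div_nonpos_of_nonpos_of_nonneg
        · exact neg_nonpos.mpr (by positivity)
        · positivity
      have hA : (1:ℝ) ≤ 1 + w x ^ 2 := by nlinarith [sq_nonneg (w x)]
      have h2 : (x ^ 3 * (1 + w x ^ 2) / 2) * Qpoly c₀ lam p (kappaFun w x) ≤ -(c/2) * x ^ 3 := by
        have hx3 : 0 < x ^ 3 := by positivity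
        nlinarith [mul_pos hx3 hc, mul_le_mul_of_nonneg_left hq (le_of_lt (by positivity : (0:ℝ) < x ^ 3 * (1 + w x ^ 2) / 2))]
      linarith
    have hanti : AntitoneOn Φ (Set.Ioo 0 b) := antitoneOn_Ioo_of_deriv hΦd hΦneg
    have hΦlim : Tendsto Φ (nhdsWithin 0 (Set.Ioi 0)) (nhds 0) := by
      have h4 : Tendsto (fun a : ℝ => c/8 * a ^ 4) (nhdsWithin 0 (Set.Ioi 0)) (nhds 0) := by
        have : Tendsto (fun a : ℝ => c/8 * a ^ 4) (nhds 0) (nhds (c/8 * 0 ^ 4)) :=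
          (continuous_const.mul (continuous_pow 4)).tendsto 0
        simpa using this.mono_left nhdsWithin_le_nhds
      simpa using lG.add h4
    have hev : ∀ᶠ a in nhdsWithin 0 (Set.Ioi 0), Φ r ≤ Φ a := by
      filter_upwards [Ioo_mem_nhdsGT_of_mem (Set.left_mem_Ico.2 hr.1)] with a ha
      exact hanti ⟨ha.1, lt_trans ha.2 hr.2⟩ hr (le_of_lt ha.2)
    have := ge_of_tendsto hΦlim hev
    rw [hΦdef] at this
    simp only at this
    linarith
  -- bootstrap: κ ≤ w₀' on (0, r₀)
  have hQw₀ : Qpoly c₀ lam p w₀' < 0 := hQneg w₀' ⟨hw₀.le, le_rfl⟩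
  set c₁ : ℝ := -Qpoly c₀ lam p w₀' / 2 with hc₁def
  have hc₁pos : 0 < c₁ := by rw [hc₁def]; linarith
  have hQk : Tendsto (fun r => Qpoly c₀ lam p (kappaFun w r)) (nhdsWithin 0 (Set.Ioi 0))
      (nhds (Qpoly c₀ lam p w₀')) := by
    have hQc : Continuous (Qpoly c₀ lam p) := by unfold Qpoly; fun_prop
    exact (hQc.tendsto w₀').comp lk
  have hev1 : ∀ᶠ r in nhdsWithin 0 (Set.Ioi 0), Qpoly c₀ lam p (kappaFun w r) ≤ -c₁ := by
    have h1 : Qpoly c₀ lam p w₀' < -c₁ := by rw [hc₁def]; linarith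
    exact (hQk.eventually_lt_const h1).mono fun x h => h.le
  obtain ⟨u, hu, husub⟩ := mem_nhdsGT_iff_exists_Ioo_subset.1 hev1
  set b₁ := min u r₀ with hb₁def
  have hb₁pos : 0 < b₁ := lt_min hu hr₀pos
  have hb₁r₀ : b₁ ≤ r₀ := min_le_right _ _
  have hQb₁ : ∀ r ∈ Set.Ioo (0:ℝ) b₁, Qpoly c₀ lam p (kappaFun w r) ≤ -c₁ :=
    fun r hr => husub ⟨hr.1, lt_of_lt_of_le hr.2 (min_le_left _ _)⟩
  have hGneg₁ := hint c₁ hc₁pos b₁ hb₁pos hb₁r₀ hQb₁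
  have hsanti₁ : StrictAntiOn (kappaFun w) (Set.Ioo 0 b₁) := by
    apply strictAntiOn_Ioo_of_deriv
      (fun x hx => hκd x (Set.Ioo_subset_Ioo le_rfl hb₁r₀ hx))
    intro x hx
    have h1 := hGneg₁ x hx
    have hx3 : (0:ℝ) < x ^ 3 := pow_pos hx.1 3
    have h2 : GFun w x < 0 := lt_of_le_of_lt h1 (by nlinarith [hc₁pos, pow_pos hx.1 4])
    exact div_neg_of_neg_of_pos h2 hx3
  have hkle₁ : ∀ r ∈ Set.Ioo (0:ℝ) b₁, kappaFun w r < w₀' := by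
    intro r hr
    have h2 : r/2 ∈ Set.Ioo (0:ℝ) b₁ := ⟨by linarith [hr.1], by linarith [hr.1, hr.2]⟩
    have hlt : kappaFun w r < kappaFun w (r/2) := hsanti₁ h2 hr (by linarith [hr.1])
    have hle : kappaFun w (r/2) ≤ w₀' := by
      apply ge_of_tendsto lk
      filter_upwards [Ioo_mem_nhdsGT_of_mem (Set.left_mem_Ico.2 h2.1)] with a ha
      exact (hsanti₁ ⟨ha.1, lt_trans ha.2 h2.2⟩ h2 ha.2).le
    linarith
  have hkle : ∀ r ∈ Set.Ioo (0:ℝ) r₀, kappaFun w r ≤ w₀' := by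
    by_contra hcon
    push_neg at hcon
    obtain ⟨rb, hrb, hrbgt⟩ := hcon
    set Bd := {r | r ∈ Set.Ioo (0:ℝ) r₀ ∧ w₀' < kappaFun w r} with hBddef
    have hBdmem : rb ∈ Bd := ⟨hrb, hrbgt⟩
    have hBdne : Bd.Nonempty := ⟨rb, hBdmem⟩
    have hBdbdd : BddBelow Bd := ⟨0, fun x hx => hx.1.1.le⟩
    set r₁ := sInf Bd with hr₁def
    have hr₁lb : ∀ x ∈ Bd, b₁ ≤ x := by
      intro x hx
      by_contra hxb
      push_neg at hxb
      exact absurd hx.2 (not_lt.2 (hkle₁ x ⟨hx.1.1, hxb⟩).le)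
    have hr₁geb₁ : b₁ ≤ r₁ := le_csInf hBdne hr₁lb
    have hr₁lt : r₁ < r₀ := lt_of_le_of_lt (csInf_le hBdbdd hBdmem) hrb.2
    have hr₁mem : r₁ ∈ Set.Ioo (0:ℝ) r₀ := ⟨lt_of_lt_of_le hb₁pos hr₁geb₁, hr₁lt⟩
    have hκcont : ContinuousAt (kappaFun w) r₁ := (hκd r₁ hr₁mem).continuousAt
    have hκr₁ : w₀' ≤ kappaFun w r₁ := by
      by_contra hlt
      push_neg at hlt
      have hev2 : ∀ᶠ x in nhds r₁, kappaFun w x < w₀' :=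
        hκcont.eventually_lt_const hlt
      obtain ⟨η, hη, hball⟩ := Metric.eventually_nhds_iff.1 hev2
      have hlb : r₁ + η ≤ r₁ := by
        apply le_csInf hBdne
        intro x hx
        by_contra hxlt
        push_neg at hxlt
        have hxge : r₁ ≤ x := csInf_le hBdbdd hx
        have hd : dist x r₁ < η := by
          rw [Real.dist_eq, abs_of_nonneg (by linarith)]; linarith
        exact absurd hx.2 (not_lt.2 (hball hd).le)
      linarith
    have hgood : ∀ x ∈ Set.Ioo (0:ℝ) r₁, Qpoly c₀ lam p (kappaFun w x) ≤ -δ := by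
      intro x hx
      have hxr₀ : x ∈ Set.Ioo (0:ℝ) r₀ := ⟨hx.1, lt_trans hx.2 hr₁lt⟩
      have hxk : kappaFun w x ≤ w₀' := by
        by_contra hgt
        push_neg at hgt
        have := csInf_le hBdbdd (⟨hxr₀, hgt⟩ : x ∈ Bd)
        linarith [hx.2]
      exact hδle _ ⟨(hκpos x hxr₀).le, hxk⟩
    have hG2 := hint δ hδpos r₁ hr₁mem.1 hr₁lt.le hgood
    have hsanti₂ : StrictAntiOn (kappaFun w) (Set.Ioo 0 r₁) := by
      apply strictAntiOn_Ioo_of_deriv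
        (fun x hx => hκd x (Set.Ioo_subset_Ioo le_rfl hr₁lt.le hx))
      intro x hx
      have h1 := hG2 x hx
      have hx3 : (0:ℝ) < x ^ 3 := pow_pos hx.1 3
      have h2 : GFun w x < 0 := lt_of_le_of_lt h1 (by nlinarith [hδpos, pow_pos hx.1 4])
      exact div_neg_of_neg_of_pos h2 hx3
    have hx₀ : b₁/2 ∈ Set.Ioo (0:ℝ) r₁ := ⟨by linarith, by linarith⟩
    have hlim2 : Tendsto (kappaFun w) (nhdsWithin r₁ (Set.Iio r₁)) (nhds (kappaFun w r₁)) :=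
      hκcont.tendsto.mono_left nhdsWithin_le_nhds
    have hkr₁le : kappaFun w r₁ ≤ kappaFun w (b₁/2) := by
      apply le_of_tendsto hlim2
      filter_upwards [Ioo_mem_nhdsLT_of_mem (Set.mem_Ioc.2 ⟨hx₀.2, le_refl r₁⟩)] with x hx2
      exact (hsanti₂ hx₀ ⟨lt_trans hx₀.1 hx2.1, hx2.2⟩ hx2.1).le
    have hk2 : kappaFun w (b₁/2) < w₀' := hkle₁ _ ⟨by linarith, by linarith⟩
    linarith
  -- final bounds
  have hQall : ∀ r ∈ Set.Ioo (0:ℝ) r₀, Qpoly c₀ lam p (kappaFun w r) ≤ -δ :=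
    fun r hr => hδle _ ⟨(hκpos r hr).le, hkle r hr⟩
  have hGfin := hint δ hδpos r₀ hr₀pos le_rfl hQall
  have hderivκ : ∀ r ∈ Set.Ioo (0:ℝ) r₀, deriv (kappaFun w) r ≤ -(δ/8) * r := by
    intro r hr
    rw [(hκd r hr).deriv]
    have h3 : (0:ℝ) < r ^ 3 := pow_pos hr.1 3
    rw [div_le_iff₀ h3]
    nlinarith [hGfin r hr]
  have hκbound : ∀ r ∈ Set.Ioo (0:ℝ) r₀, kappaFun w r ≤ w₀' - δ/16 * r ^ 2 := by
    set Ψ : ℝ → ℝ := fun x => kappaFun w x + δ/16 * x ^ 2 with hΨdef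
    have hΨd : ∀ x ∈ Set.Ioo (0:ℝ) r₀, HasDerivAt Ψ (GFun w x / x ^ 3 + δ/8 * x) x := by
      intro x hx
      have h2 : HasDerivAt (fun y : ℝ => δ/16 * y ^ 2) (δ/8 * x) x := by
        have := (hasDerivAt_pow 2 x).const_mul (δ/16)
        refine this.congr_deriv ?_
        push_cast; ring
      exact (hκd x hx).add h2
    have hΨneg : ∀ x ∈ Set.Ioo (0:ℝ) r₀, GFun w x / x ^ 3 + δ/8 * x ≤ 0 := by
      intro x hx
      have h3 : (0:ℝ) < x ^ 3 := pow_pos hx.1 3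
      have h4 : GFun w x / x ^ 3 ≤ -(δ/8) * x := by
        rw [div_le_iff₀ h3]
        nlinarith [hGfin x hx]
      linarith
    have hanti := antitoneOn_Ioo_of_deriv hΨd hΨneg
    have hΨlim : Tendsto Ψ (nhdsWithin 0 (Set.Ioi 0)) (nhds w₀') := by
      have h2 : Tendsto (fun a : ℝ => δ/16 * a ^ 2) (nhdsWithin 0 (Set.Ioi 0)) (nhds 0) := by
        have : Tendsto (fun a : ℝ => δ/16 * a ^ 2) (nhds 0) (nhds (δ/16 * 0 ^ 2)) :=
          (continuous_const.mul (continuous_pow 2)).tendsto 0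
        simpa using this.mono_left nhdsWithin_le_nhds
      simpa using lk.add h2
    intro r hr
    have hev : ∀ᶠ a in nhdsWithin 0 (Set.Ioi 0), Ψ r ≤ Ψ a := by
      filter_upwards [Ioo_mem_nhdsGT_of_mem (Set.left_mem_Ico.2 hr.1)] with a ha
      exact hanti ⟨ha.1, lt_trans ha.2 hr.2⟩ hr (le_of_lt ha.2)
    have := ge_of_tendsto hΨlim hev
    simp only [hΨdef] at this
    linarith
  refine ⟨fun r hr => ⟨hderivκ r hr, hκbound r hr⟩, ?_⟩
  intro _ r hr
  have hk := hκpos r hr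
  have hb := hκbound r hr
  have hr0 := hr.1
  have key : r ^ 2 * (kappaFun w r) ^ 2 ≤ 64 * w₀' ^ 3 / (27 * δ) := by
    rw [le_div_iff₀ (by linarith : (0:ℝ) < 27 * δ)]
    set k := kappaFun w r with hkdef
    set x := δ/16 * r ^ 2 with hxdef
    have hx0 : 0 < x := mul_pos (by linarith : (0:ℝ) < δ/16) (pow_pos hr0 2)
    have hkx : k ≤ w₀' - x := hb
    have hxw : x < w₀' := by linarith
    have hk2 : k ^ 2 ≤ (w₀' - x) ^ 2 := by nlinarith
    have hfact : 27 * x * (w₀' - x) ^ 2 ≤ 4 * w₀' ^ 3 := by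
      nlinarith [mul_nonneg (sq_nonneg (3 * x - w₀')) (by linarith : (0:ℝ) ≤ 4 * w₀' - 3 * x)]
    have h5 : r ^ 2 * k ^ 2 * (27 * δ) = 432 * (x * k ^ 2) := by rw [hxdef]; ring
    have h6 : x * k ^ 2 ≤ x * (w₀' - x) ^ 2 := mul_le_mul_of_nonneg_left hk2 hx0.le
    linarith
  unfold xiQ
  rw [← hδdef]
  linarith
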